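/- Let f, g : ℂ → ℂ be continuous functions on the closed second quadrant D̄₂ = {k : Re k ≤ 0, Im k ≥ 0} that are analytic on its interior, with f(k) → 1 and g(k) → 1 as |k| → ∞ in D̄₂. If |g(k) − f(k)| < |f(k)| on the boundary ∂D₂ = (−∞,0] ∪ i[0,∞), and g has no zeros in D̄₂, then f has no zeros in D̄₂. -/

import Mathlib

/-- The closed second quadrant. -/
def closedD2 : Set ℂ := {k : ℂ | k.re ≤ 0 ∧ 0 ≤ k.im}

/-- The open second quadrant. -/
def openD2 : Set ℂ := {k : ℂ | k.re < 0 ∧ 0 < k.im}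

/-- The boundary of the second quadrant: the negative real axis together with
the positive imaginary axis. -/
def bdryD2 : Set ℂ := {k : ℂ | (k.im = 0 ∧ k.re ≤ 0) ∨ (k.re = 0 ∧ 0 ≤ k.im)}

/-!
On the boundary, `‖g - f‖ < ‖f‖` says `‖1 - f/g‖ < ‖f/g‖`, i.e. `re (f/g) > 1/2`. Since
`f/g → 1` at infinity, `exp (-(f/g))` is bounded on the quadrant, so the Phragmén–Lindelöf
principle propagates `‖exp (-(f/g))‖ ≤ exp (-1/2)`, i.e. `re (f/g) ≥ 1/2`, to the whole closed
quadrant; in particular `f/g`, hence `f`, never vanishes there.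
-/

open Complex Set Filter Asymptotics Bornology Topology

lemma one_half_lt_re_of_norm_one_sub_lt {w : ℂ} (h : ‖1 - w‖ < ‖w‖) : 1 / 2 < w.re := by
  have hsq : normSq (1 - w) < normSq w := by
    simpa only [normSq_eq_norm_sq] using pow_lt_pow_left₀ h (norm_nonneg _) two_ne_zero
  simp only [normSq_apply, sub_re, one_re, sub_im, one_im] at hsq
  nlinarith

lemma one_half_lt_re_div_of_norm_sub_lt {a b : ℂ} (hb : b ≠ 0) (h : ‖b - a‖ < ‖a‖) :
    1 / 2 < (a / b).re := by
  refine one_half_lt_re_of_norm_one_sub_lt ?_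
  rw [one_sub_div hb, norm_div, norm_div]
  exact div_lt_div_of_pos_right h (norm_pos_iff.mpr hb)

lemma tendsto_cobounded_inf_principal_of_norm_sub_lt {E F : Type*} [SeminormedAddCommGroup E]
    [SeminormedAddCommGroup F] {f : E → F} {s : Set E} {c : F}
    (h : ∀ ε > 0, ∃ R, ∀ x ∈ s, R ≤ ‖x‖ → ‖f x - c‖ < ε) :
    Tendsto f (cobounded E ⊓ 𝓟 s) (𝓝 c) := by
  refine Metric.tendsto_nhds.mpr fun ε hε => ?_
  obtain ⟨R, hR⟩ := h ε hε
  filter_upwards [(eventually_cobounded_le_norm R).filter_mono inf_le_left,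
    mem_inf_of_right (mem_principal_self s)] with x hRx hx
  simpa only [dist_eq_norm] using hR x hx hRx

-- Phragmén–Lindelöf applied to `exp (-h)`, whose modulus is `exp (-re h)`.
lemma le_re_of_diffContOnCl_quadrant_II {h : ℂ → ℂ} {a : ℝ} {z : ℂ}
    (hd : DiffContOnCl ℂ h (Iio 0 ×ℂ Ioi 0))
    (hB : h =O[cobounded ℂ ⊓ 𝓟 (Iio 0 ×ℂ Ioi 0)] fun _ => (1 : ℝ))
    (hre : ∀ x : ℝ, x ≤ 0 → a ≤ (h x).re) (him : ∀ x : ℝ, 0 ≤ x → a ≤ (h (x * I)).re)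
    (hz_re : z.re ≤ 0) (hz_im : 0 ≤ z.im) : a ≤ (h z).re := by
  have hnorm : ∀ w, ‖exp (-h w)‖ = Real.exp (-(h w).re) := fun w => by
    rw [norm_exp, neg_re]
  obtain ⟨C, hC⟩ := hB.bound
  have hexpB : (fun w => exp (-h w)) =O[cobounded ℂ ⊓ 𝓟 (Iio 0 ×ℂ Ioi 0)]
      fun w => Real.exp (0 * ‖w‖ ^ (1 : ℝ)) := by
    refine IsBigO.of_bound (Real.exp C) ?_
    filter_upwards [hC] with w hw
    rw [hnorm, zero_mul, Real.exp_zero, norm_one, mul_one]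
    rw [norm_one, mul_one] at hw
    exact Real.exp_le_exp.mpr ((neg_le_abs _).trans ((abs_re_le_norm _).trans hw))
  have hbound := PhragmenLindelof.quadrant_II (f := fun w => exp (-h w)) (C := Real.exp (-a))
    ⟨hd.differentiableOn.neg.cexp, hd.continuousOn.neg.cexp⟩ ⟨1, one_lt_two, 0, hexpB⟩
    (fun x hx => by rw [hnorm]; exact Real.exp_le_exp.mpr (neg_le_neg (hre x hx)))
    (fun x hx => by rw [hnorm]; exact Real.exp_le_exp.mpr (neg_le_neg (him x hx))) hz_re hz_im
  rw [hnorm] at hbound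
  exact neg_le_neg_iff.mp (Real.exp_le_exp.mp hbound)

lemma openD2_eq_reProdIm : openD2 = Iio (0 : ℝ) ×ℂ Ioi (0 : ℝ) := rfl

lemma closure_openD2 : closure openD2 = closedD2 := by
  rw [openD2_eq_reProdIm, closure_reProdIm, closure_Iio, closure_Ioi]
  rfl

lemma openD2_subset_closedD2 : openD2 ⊆ closedD2 := closure_openD2 ▸ subset_closure

lemma bdryD2_subset_closedD2 : bdryD2 ⊆ closedD2 := by
  rintro k (⟨him, hre⟩ | ⟨hre, him⟩)
  exacts [⟨hre, him.ge⟩, ⟨hre.le, him⟩]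

theorem rouche_sector_nonvanishing
    (f g : ℂ → ℂ)
    (hf_cont : ContinuousOn f closedD2) (hg_cont : ContinuousOn g closedD2)
    (hf_anal : DifferentiableOn ℂ f openD2) (hg_anal : DifferentiableOn ℂ g openD2)
    (hf_lim : ∀ ε > 0, ∃ R, ∀ k ∈ closedD2, R ≤ ‖k‖ →
      ‖f k - 1‖ < ε)
    (hg_lim : ∀ ε > 0, ∃ R, ∀ k ∈ closedD2, R ≤ ‖k‖ →
      ‖g k - 1‖ < ε)
    (hbd : ∀ k ∈ bdryD2, ‖g k - f k‖ < ‖f k‖)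
    (hg_nz : ∀ k ∈ closedD2, g k ≠ 0) :
    ∀ k ∈ closedD2, f k ≠ 0 := by
  have hd : DiffContOnCl ℂ (f / g) openD2 :=
    ⟨hf_anal.div hg_anal fun z hz => hg_nz z (openD2_subset_closedD2 hz),
      closure_openD2 ▸ hf_cont.div hg_cont hg_nz⟩
  have hlim : Tendsto (f / g) (cobounded ℂ ⊓ 𝓟 closedD2) (𝓝 1) := by
    simpa only [div_one] using (tendsto_cobounded_inf_principal_of_norm_sub_lt hf_lim).div
      (tendsto_cobounded_inf_principal_of_norm_sub_lt hg_lim) one_ne_zero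
  have hB := hlim.isBigO_one ℝ |>.mono <| inf_le_inf_left _ <|
    principal_mono.mpr openD2_subset_closedD2
  have hbdry : ∀ k ∈ bdryD2, 1 / 2 ≤ ((f / g) k).re := fun k hk =>
    (one_half_lt_re_div_of_norm_sub_lt (hg_nz k (bdryD2_subset_closedD2 hk)) (hbd k hk)).le
  intro k hk hfk
  have hre := le_re_of_diffContOnCl_quadrant_II hd hB
    (fun x hx => hbdry x (Or.inl ⟨ofReal_im x, hx⟩))
    (fun x hx => hbdry _ (Or.inr ⟨by simp, by simpa using hx⟩)) hk.1 hk.2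
  norm_num [hfk] at hre
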